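/- Let z, z' ∈ ℂ^n be unit vectors with |⟨z, z'⟩| ≤ δ, and let v ∈ ℂ^n be a unit vector with |⟨v, z⟩|² ≥ 1 − ψ for some ψ ≥ 0. If δ ≤ √(2ψ) ≤ 1/2, then |⟨v, z'⟩|² ≤ 4√(2ψ). -/

import Mathlib

/-!
Write `v = a z + w` with `a = ⟨z, v⟩` and `w ⊥ z`. Pythagoras gives `‖w‖² = 1 - |a|² ≤ ψ`, so
`|⟨v, z'⟩| ≤ |a| |⟨z, z'⟩| + ‖w‖ ≤ δ + √ψ ≤ 2√(2ψ)`, and squaring uses `√(2ψ) ≤ 1/2`.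
-/

open scoped BigOperators

noncomputable section

/-- The standard Hermitian inner product on `ℂ^n`. -/
def hInner {n : ℕ} (x y : Fin n → ℂ) : ℂ := ∑ i, (starRingEnd ℂ) (x i) * y i

/-- The `ℓ₂` norm on `ℂ^n`. -/
def hNorm {n : ℕ} (x : Fin n → ℂ) : ℝ := Real.sqrt (∑ i, ‖x i‖ ^ 2)

open scoped InnerProductSpace

section InnerProductSpace

variable {𝕜 E : Type*} [RCLike 𝕜] [NormedAddCommGroup E] [InnerProductSpace 𝕜 E]

theorem norm_sub_inner_smul_sq {z : E} (hz : ‖z‖ = 1) (v : E) :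
    ‖v - ⟪z, v⟫_𝕜 • z‖ ^ 2 = ‖v‖ ^ 2 - ‖⟪z, v⟫_𝕜‖ ^ 2 := by
  rw [@norm_sub_sq 𝕜, inner_smul_right, ← inner_conj_symm v z, RCLike.mul_conj, norm_smul, hz]
  simp only [mul_one, ← RCLike.ofReal_pow, RCLike.ofReal_re]
  ring

theorem norm_inner_le_norm_inner_add_sqrt {z z' v : E} (hz : ‖z‖ = 1) (hv : ‖v‖ = 1) {ψ : ℝ}
    (hvz : 1 - ψ ≤ ‖⟪v, z⟫_𝕜‖ ^ 2) :
    ‖⟪v, z'⟫_𝕜‖ ≤ ‖⟪z, z'⟫_𝕜‖ + √ψ * ‖z'‖ := by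
  set a := ⟪z, v⟫_𝕜
  set w := v - a • z
  have ha : ‖a‖ ≤ 1 := by simpa [hz, hv] using norm_inner_le_norm (𝕜 := 𝕜) z v
  have hw : ‖w‖ ≤ √ψ := by
    rw [← norm_inner_symm] at hvz
    refine Real.le_sqrt_of_sq_le ?_
    rw [norm_sub_inner_smul_sq hz, hv]
    linarith
  have hdecomp : ⟪v, z'⟫_𝕜 = (starRingEnd 𝕜) a * ⟪z, z'⟫_𝕜 + ⟪w, z'⟫_𝕜 := by
    rw [inner_sub_left, inner_smul_left]
    ring
  calc ‖⟪v, z'⟫_𝕜‖ ≤ ‖a‖ * ‖⟪z, z'⟫_𝕜‖ + ‖w‖ * ‖z'‖ := by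
        rw [hdecomp, ← RCLike.norm_conj a, ← norm_mul]
        exact (norm_add_le _ _).trans (add_le_add_right (norm_inner_le_norm w z') _)
    _ ≤ 1 * ‖⟪z, z'⟫_𝕜‖ + √ψ * ‖z'‖ := by gcongr
    _ = ‖⟪z, z'⟫_𝕜‖ + √ψ * ‖z'‖ := by rw [one_mul]

end InnerProductSpace

theorem hInner_eq_inner {n : ℕ} (x y : Fin n → ℂ) :
    hInner x y = ⟪WithLp.toLp 2 x, WithLp.toLp 2 y⟫_ℂ := by
  simp only [hInner, PiLp.inner_apply, RCLike.inner_apply]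
  exact Finset.sum_congr rfl fun i _ => mul_comm _ _

theorem hNorm_eq_norm {n : ℕ} (x : Fin n → ℂ) : hNorm x = ‖WithLp.toLp 2 x‖ := by
  rw [EuclideanSpace.norm_eq]
  rfl

/-- if `z, z'` are unit vectors with `|⟨z,z'⟩| ≤ δ`, and `v` is a unit
vector with `|⟨v,z⟩|² ≥ 1 − ψ`, where `δ ≤ √(2ψ) ≤ 1/2`, then `|⟨v,z'⟩|² ≤ 4√(2ψ)`. -/
theorem stmt19 {n : ℕ} (z z' v : Fin n → ℂ)
    (hz : hNorm z = 1) (hz' : hNorm z' = 1) (hv : hNorm v = 1)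
    (δ ψ : ℝ) (hψ : 0 ≤ ψ)
    (hzz' : ‖hInner z z'‖ ≤ δ)
    (hvz : 1 - ψ ≤ ‖hInner v z‖ ^ 2)
    (hδ : δ ≤ Real.sqrt (2 * ψ)) (hhalf : Real.sqrt (2 * ψ) ≤ 1 / 2) :
    ‖hInner v z'‖ ^ 2 ≤ 4 * Real.sqrt (2 * ψ) := by
  rw [hNorm_eq_norm] at hz hz' hv
  rw [hInner_eq_inner] at hzz' hvz ⊢
  have hbound := norm_inner_le_norm_inner_add_sqrt (z' := WithLp.toLp 2 z') hz hv hvz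
  rw [hz', mul_one] at hbound
  have hsqrt : √ψ ≤ √(2 * ψ) := Real.sqrt_le_sqrt (by linarith)
  have hnorm : ‖⟪WithLp.toLp 2 v, WithLp.toLp 2 z'⟫_ℂ‖ ≤ 2 * √(2 * ψ) := by linarith
  nlinarith [norm_nonneg ⟪WithLp.toLp 2 v, WithLp.toLp 2 z'⟫_ℂ]
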